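/- arXiv:2410.20637 — 2 statements merged into one kernel-verified Lean document; each statement's English description precedes it below -/
import Mathlib

section
/- A pair (A, C) of real matrices (A of size n×n, C of size m×n) is unobservable (i.e., the observability matrix formed by stacking C, CA, ..., CA^{n-1} has rank less than n) if and only if there exists a nonzero eigenvector v of A with Cv = 0, where eigenvectors may be complex. -/
open Matrix

/-- The observability matrix of the pair `(A, C)`: the stack of `C, C*A, ..., C*A^(n-1)`. -/
noncomputable def obsMatrix {n : ℕ} {m : Type*} (A : Matrix (Fin n) (Fin n) ℝ)
    (C : Matrix m (Fin n) ℝ) : Matrix (Fin n × m) (Fin n) ℝ :=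
  fun p j => (C * A ^ (p.1 : ℕ)) p.2 j

/-- The pair `(A, C)` is observable iff its observability matrix has full column rank `n`. -/
def Observable {n : ℕ} {m : Type*} (A : Matrix (Fin n) (Fin n) ℝ)
    (C : Matrix m (Fin n) ℝ) : Prop :=
  (obsMatrix A C).rank = n

/-!
By Cayley–Hamilton, the kernel of the observability matrix is the unobservable subspace
`⋂ₖ ker (C * A ^ k)` over all `k : ℕ`, which is `A`-invariant. Over `ℂ` a nonzero `A`-invariant
subspace contains an eigenvector of `A`, and it lies in `ker C`; conversely an eigenvector `v`
with `C v = 0` satisfies `C Aᵏ v = μᵏ C v = 0`. A real subspace of this form and its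
complexification are trivial together, by taking real and imaginary parts.
-/

open Polynomial

theorem Module.End.exists_hasEigenvector_mem_of_mapsTo {K V : Type*} [Field K] [IsAlgClosed K]
    [AddCommGroup V] [Module K V] [FiniteDimensional K V] (f : Module.End K V)
    {p : Submodule K V} (hp : p ≠ ⊥) (hfp : ∀ x ∈ p, f x ∈ p) :
    ∃ μ v, v ∈ p ∧ f.HasEigenvector μ v := by
  have : Nontrivial p := Submodule.nontrivial_iff_ne_bot.mpr hp
  obtain ⟨μ, hμ⟩ := Module.End.exists_eigenvalue (f.restrict hfp)
  obtain ⟨v, hv⟩ := hμ.exists_hasEigenvector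
  refine ⟨μ, v, v.2, ?_, by simpa using hv.2⟩
  simpa [Subtype.ext_iff] using Module.End.mem_eigenspace_iff.mp hv.1

namespace Matrix

section CommRing

variable {R : Type*} [CommRing R] {n m : Type*} [Fintype n] [DecidableEq n]

def unobservableSubspace (A : Matrix n n R) (C : Matrix m n R) : Submodule R (n → R) :=
  ⨅ k : ℕ, LinearMap.ker (C * A ^ k).mulVecLin

variable {A : Matrix n n R} {C : Matrix m n R} {v : n → R}

theorem mem_unobservableSubspace :
    v ∈ unobservableSubspace A C ↔ ∀ k : ℕ, (C * A ^ k) *ᵥ v = 0 := by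
  simp [unobservableSubspace]

theorem mulVec_mem_unobservableSubspace (hv : v ∈ unobservableSubspace A C) :
    A *ᵥ v ∈ unobservableSubspace A C := by
  rw [mem_unobservableSubspace] at hv ⊢
  intro k
  rw [mulVec_mulVec, Matrix.mul_assoc, ← pow_succ, hv]

theorem mem_unobservableSubspace_of_eigenvector {μ : R} (hAv : A *ᵥ v = μ • v)
    (hCv : C *ᵥ v = 0) : v ∈ unobservableSubspace A C := by
  have hpow : ∀ k : ℕ, A ^ k *ᵥ v = μ ^ k • v := by
    intro k
    induction k with
    | zero => simp
    | succ k ih => rw [pow_succ', ← mulVec_mulVec, ih, mulVec_smul, hAv, smul_smul, pow_succ]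
  rw [mem_unobservableSubspace]
  intro k
  rw [← mulVec_mulVec, hpow, mulVec_smul, hCv, smul_zero]

theorem mem_unobservableSubspace_of_forall_lt_card
    (h : ∀ k < Fintype.card n, (C * A ^ k) *ᵥ v = 0) : v ∈ unobservableSubspace A C := by
  nontriviality R
  rcases isEmpty_or_nonempty n with hn | hn
  · simp [Subsingleton.elim v 0]
  rw [mem_unobservableSubspace]
  intro k
  have hdeg : (X ^ k %ₘ A.charpoly).natDegree < Fintype.card n := by
    have hne : A.charpoly ≠ 1 := fun h1 => Fintype.card_ne_zero (α := n) (by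
      simpa [h1] using A.charpoly_natDegree_eq_dim.symm)
    rw [← A.charpoly_natDegree_eq_dim]
    exact natDegree_modByMonic_lt _ A.charpoly_monic hne
  rw [pow_eq_aeval_mod_charpoly, aeval_eq_sum_range' hdeg, Matrix.mul_sum, sum_mulVec]
  refine Finset.sum_eq_zero fun i hi => ?_
  rw [Matrix.mul_smul, smul_mulVec, h i (Finset.mem_range.mp hi), smul_zero]

end CommRing

section Field

variable {K : Type*} [Field K] {n m : Type*} [Fintype n] [DecidableEq n]
  {A : Matrix n n K} {C : Matrix m n K}

theorem unobservableSubspace_ne_bot_iff [IsAlgClosed K] :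
    unobservableSubspace A C ≠ ⊥ ↔
      ∃ v : n → K, v ≠ 0 ∧ (∃ μ : K, A *ᵥ v = μ • v) ∧ C *ᵥ v = 0 := by
  constructor
  · intro h
    obtain ⟨μ, v, hv, hμv⟩ := Module.End.exists_hasEigenvector_mem_of_mapsTo
      A.mulVecLin h fun _ => mulVec_mem_unobservableSubspace
    refine ⟨v, hμv.2, ⟨μ, Module.End.mem_eigenspace_iff.mp hμv.1⟩, ?_⟩
    simpa using mem_unobservableSubspace.mp hv 0
  · rintro ⟨v, hv0, ⟨μ, hAv⟩, hCv⟩ hbot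
    exact hv0 ((Submodule.eq_bot_iff _).mp hbot v (mem_unobservableSubspace_of_eigenvector hAv hCv))

end Field

section Real

open Complex

variable {n m : Type*} [Fintype n]

theorem map_ofReal_mulVec_eq_zero_iff (M : Matrix m n ℝ) (w : n → ℂ) :
    M.map ofReal *ᵥ w = 0 ↔ M *ᵥ (re ∘ w) = 0 ∧ M *ᵥ (im ∘ w) = 0 := by
  simp only [funext_iff, Complex.ext_iff, Pi.zero_apply, forall_and]
  simp [mulVec, dotProduct, re_sum, im_sum]

variable [DecidableEq n] {A : Matrix n n ℝ} {C : Matrix m n ℝ}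

theorem mem_unobservableSubspace_map_ofReal {w : n → ℂ} :
    w ∈ unobservableSubspace (A.map ofReal) (C.map ofReal) ↔
      re ∘ w ∈ unobservableSubspace A C ∧ im ∘ w ∈ unobservableSubspace A C := by
  have hmap (k : ℕ) : (C * A ^ k).map ofReal = C.map ofReal * A.map ofReal ^ k := by
    change (C * A ^ k).map ofRealHom = C.map ofRealHom * A.map ofRealHom ^ k
    rw [Matrix.map_mul, Matrix.map_pow]
  simp only [mem_unobservableSubspace, ← forall_and, ← hmap, map_ofReal_mulVec_eq_zero_iff]

theorem unobservableSubspace_map_ofReal_eq_bot_iff :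
    unobservableSubspace (A.map ofReal) (C.map ofReal) = ⊥ ↔ unobservableSubspace A C = ⊥ := by
  simp only [Submodule.eq_bot_iff, mem_unobservableSubspace_map_ofReal]
  constructor
  · intro h v hv
    simpa [funext_iff] using h (ofReal ∘ v) ⟨hv, (unobservableSubspace A C).zero_mem⟩
  · intro h w ⟨hre, him⟩
    funext i
    apply Complex.ext
    · exact congrFun (h _ hre) i
    · exact congrFun (h _ him) i

end Real

end Matrix

variable {n : ℕ} {m : Type*} {A : Matrix (Fin n) (Fin n) ℝ} {C : Matrix m (Fin n) ℝ}

theorem ker_obsMatrix_mulVecLin :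
    LinearMap.ker (obsMatrix A C).mulVecLin = unobservableSubspace A C := by
  ext v
  have hrow (k : Fin n) : (C * A ^ (k : ℕ)) *ᵥ v = fun i => (obsMatrix A C *ᵥ v) (k, i) := rfl
  rw [LinearMap.mem_ker, mulVecLin_apply]
  refine ⟨fun hv => mem_unobservableSubspace_of_forall_lt_card fun k hk => ?_, fun hv => ?_⟩
  · rw [hrow ⟨k, by simpa using hk⟩, hv]
    rfl
  · funext p
    exact congrFun (mem_unobservableSubspace.mp hv p.1) p.2

theorem observable_iff_unobservableSubspace_eq_bot :
    Observable A C ↔ unobservableSubspace A C = ⊥ := by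
  have hrank_nullity := LinearMap.finrank_range_add_finrank_ker (obsMatrix A C).mulVecLin
  rw [Module.finrank_fin_fun, ← rank, ker_obsMatrix_mulVecLin] at hrank_nullity
  rw [Observable, ← Submodule.finrank_eq_zero]
  omega

/-- The pair (A, C) is unobservable iff some (possibly complex) nonzero eigenvector v of A
satisfies Cv = 0. -/
theorem unobservable_iff_eigenvector {n m : ℕ} (A : Matrix (Fin n) (Fin n) ℝ)
    (C : Matrix (Fin m) (Fin n) ℝ) :
    ¬ Observable A C ↔
      ∃ v : Fin n → ℂ, v ≠ 0 ∧ (∃ μ : ℂ, (A.map (Complex.ofReal)) *ᵥ v = μ • v) ∧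
        (C.map (Complex.ofReal)) *ᵥ v = 0 := by
  rw [observable_iff_unobservableSubspace_eq_bot, ← unobservableSubspace_map_ofReal_eq_bot_iff]
  exact unobservableSubspace_ne_bot_iff
end

section
/- If the Laplacian L of a connected graph with distinct eigenvalues admits a non-identity permutation matrix Ψ with Ψ_{nn} = 1 and ΨL = LΨ, then the single-measurement pair (-L, e_n) is unobservable: some eigenvector of L has zero n-th component. -/
open Matrix

/-- The row vector selecting the last coordinate. -/
noncomputable def anchorRow (n : ℕ) : Matrix (Fin 1) (Fin (n + 1)) ℝ :=
  fun _ j => if j = Fin.last n then 1 else 0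

/-!
If `Ψ` fixed every vector of an orthonormal eigenbasis of the symmetric matrix `L`, it would be the
identity, so some eigenvector `v` has `Ψ v ≠ v`. As `Ψ` commutes with `L`, `Ψ v - v` is again an
eigenvector for the same eigenvalue, and its last coordinate vanishes because the last row of `Ψ`
is `eₙ`. This eigenvector is annihilated by every row `eₙ (-L)ᵏ` of the observability matrix, so
that matrix has a nontrivial kernel and cannot have full column rank.
-/

namespace Matrix

variable {n R : Type*}

theorem row_eq_single_of_perm_of_apply_self_eq_one [DecidableEq n] [Zero R] [One R]
    [NeZero (1 : R)] {P : Matrix n n R} {σ : Equiv.Perm n}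
    (hσ : ∀ i j, P i j = if σ j = i then 1 else 0) {k : n} (hk : P k k = 1) :
    P k = Pi.single k 1 := by
  have hσk : σ k = k := by
    by_contra h
    simp [hσ, h] at hk
  have hσ_eq (j) : σ j = k ↔ j = k := by
    rw [← hσk, σ.injective.eq_iff, hσk]
  ext j
  simp only [hσ, hσ_eq, Pi.single_apply]

variable [Fintype n]

theorem rank_lt_card_of_mulVec_eq_zero {m K : Type*} [Field K] {M : Matrix m n K} {v : n → K}
    (hv : v ≠ 0) (hMv : M *ᵥ v = 0) : M.rank < Fintype.card n := by
  have hker : 0 < Module.finrank K (LinearMap.ker M.mulVecLin) :=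
    Module.finrank_pos_iff_exists_ne_zero.mpr ⟨⟨v, hMv⟩, fun h => hv (congrArg Subtype.val h)⟩
  have hrank_nullity := LinearMap.finrank_range_add_finrank_ker M.mulVecLin
  rw [Module.finrank_fintype_fun_eq_card] at hrank_nullity
  unfold rank
  omega

theorem pow_mulVec_of_mulVec_eq_smul [CommSemiring R] [DecidableEq n] {A : Matrix n n R}
    {v : n → R} {μ : R} (h : A *ᵥ v = μ • v) (k : ℕ) : A ^ k *ᵥ v = μ ^ k • v := by
  induction k with
  | zero => simp
  | succ k ih => rw [pow_succ', ← mulVec_mulVec, ih, mulVec_smul, h, smul_smul, pow_succ]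

theorem eq_one_of_mulVec_basis_eq [CommSemiring R] [DecidableEq n] {ι : Type*} {P : Matrix n n R}
    (b : Module.Basis ι R (n → R)) (h : ∀ i, P *ᵥ b i = b i) : P = 1 :=
  toLin'.injective <| b.ext fun i => by simpa using h i

theorem mulVec_mulVec_eq_smul_of_commute [CommSemiring R] {A P : Matrix n n R} {v : n → R} {μ : R}
    (hPA : Commute P A) (h : A *ᵥ v = μ • v) : A *ᵥ (P *ᵥ v) = μ • (P *ᵥ v) := by
  rw [mulVec_mulVec, ← hPA.eq, ← mulVec_mulVec, h, mulVec_smul]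

namespace IsHermitian

variable {𝕜 : Type*} [RCLike 𝕜] [DecidableEq n] {A P : Matrix n n 𝕜}

theorem exists_mulVec_eigenvectorBasis_ne (hA : A.IsHermitian) (hP : P ≠ 1) :
    ∃ j, P *ᵥ ⇑(hA.eigenvectorBasis j) ≠ ⇑(hA.eigenvectorBasis j) := by
  by_contra! h
  exact hP <| eq_one_of_mulVec_basis_eq
    (hA.eigenvectorBasis.toBasis.map (WithLp.linearEquiv 2 𝕜 (n → 𝕜))) (by simpa using h)

theorem exists_eigenvector_apply_eq_zero_of_commute (hA : A.IsHermitian) (hPA : Commute P A)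
    (hP : P ≠ 1) {k : n} (hk : P k = Pi.single k 1) :
    ∃ w : n → 𝕜, w ≠ 0 ∧ (∃ μ : 𝕜, A *ᵥ w = μ • w) ∧ w k = 0 := by
  obtain ⟨j, hj⟩ := hA.exists_mulVec_eigenvectorBasis_ne hP
  set v : n → 𝕜 := ⇑(hA.eigenvectorBasis j)
  have hv : A *ᵥ v = (hA.eigenvalues j : 𝕜) • v := by
    simpa only [RCLike.real_smul_eq_coe_smul (K := 𝕜)] using hA.mulVec_eigenvectorBasis j
  refine ⟨P *ᵥ v - v, sub_ne_zero.mpr hj, ⟨hA.eigenvalues j, ?_⟩, ?_⟩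
  · rw [mulVec_sub, mulVec_mulVec_eq_smul_of_commute hPA hv, hv, smul_sub]
  · rw [Pi.sub_apply, mulVec, hk, single_one_dotProduct, sub_self]

end IsHermitian

end Matrix

theorem obsMatrix_mulVec_eq_zero {n : ℕ} {m : Type*} {A : Matrix (Fin n) (Fin n) ℝ}
    {C : Matrix m (Fin n) ℝ} {w : Fin n → ℝ} {μ : ℝ} (hw : A *ᵥ w = μ • w) (hC : C *ᵥ w = 0) :
    obsMatrix A C *ᵥ w = 0 := by
  ext ⟨k, i⟩
  change ((C * A ^ (k : ℕ)) *ᵥ w) i = 0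
  rw [← mulVec_mulVec, pow_mulVec_of_mulVec_eq_smul hw, mulVec_smul, hC, smul_zero, Pi.zero_apply]

theorem not_observable_of_eigenvector {n : ℕ} {m : Type*} {A : Matrix (Fin n) (Fin n) ℝ}
    {C : Matrix m (Fin n) ℝ} {w : Fin n → ℝ} {μ : ℝ} (hw0 : w ≠ 0) (hw : A *ᵥ w = μ • w)
    (hC : C *ᵥ w = 0) : ¬ Observable A C := by
  have := rank_lt_card_of_mulVec_eq_zero hw0 (obsMatrix_mulVec_eq_zero hw hC)
  rw [Fintype.card_fin] at this
  exact this.ne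

theorem anchorRow_mulVec (n : ℕ) (w : Fin (n + 1) → ℝ) :
    anchorRow n *ᵥ w = fun _ => w (Fin.last n) := by
  ext
  simp [anchorRow, mulVec, dotProduct]

theorem symmetric_anchor_unobservable_general {n : ℕ} (G : SimpleGraph (Fin (n + 1)))
    [DecidableRel G.Adj]
    (Ψ : Matrix (Fin (n + 1)) (Fin (n + 1)) ℝ)
    (hperm : ∃ σ : Equiv.Perm (Fin (n + 1)), ∀ i j, Ψ i j = if σ j = i then 1 else 0)
    (hΨne : Ψ ≠ 1) (hfix : Ψ (Fin.last n) (Fin.last n) = 1)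
    (hcomm : Ψ * G.lapMatrix ℝ = G.lapMatrix ℝ * Ψ) :
    (∃ v : Fin (n + 1) → ℝ, v ≠ 0 ∧ (∃ μ : ℝ, G.lapMatrix ℝ *ᵥ v = μ • v) ∧
      v (Fin.last n) = 0) ∧
    ¬ Observable (-(G.lapMatrix ℝ)) (anchorRow n) := by
  obtain ⟨σ, hσ⟩ := hperm
  obtain ⟨w, hw0, ⟨μ, hw⟩, hwn⟩ :=
    (G.isHermitian_lapMatrix ℝ).exists_eigenvector_apply_eq_zero_of_commute hcomm hΨne
      (row_eq_single_of_perm_of_apply_self_eq_one hσ hfix)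
  refine ⟨⟨w, hw0, ⟨μ, hw⟩, hwn⟩, not_observable_of_eigenvector hw0 (μ := -μ) ?_ ?_⟩
  · rw [neg_mulVec, hw, neg_smul]
  · rw [anchorRow_mulVec, hwn]
    rfl

/-- If the Laplacian L of a connected graph with distinct eigenvalues (all eigenspaces
one-dimensional) commutes with a non-identity permutation matrix Ψ fixing the last
coordinate (Ψ_{nn} = 1), then some nonzero eigenvector of L has zero n-th component, and
the single-measurement pair (-L, e_n) is unobservable. -/
theorem symmetric_anchor_unobservable {n : ℕ} (G : SimpleGraph (Fin (n + 1)))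
    [DecidableRel G.Adj] (hconn : G.Connected)
    (hdistinct : ∀ (μ : ℝ) (v w : Fin (n + 1) → ℝ), v ≠ 0 →
      G.lapMatrix ℝ *ᵥ v = μ • v → G.lapMatrix ℝ *ᵥ w = μ • w → ∃ c : ℝ, w = c • v)
    (Ψ : Matrix (Fin (n + 1)) (Fin (n + 1)) ℝ)
    (hperm : ∃ σ : Equiv.Perm (Fin (n + 1)), ∀ i j, Ψ i j = if σ j = i then 1 else 0)
    (hΨne : Ψ ≠ 1) (hfix : Ψ (Fin.last n) (Fin.last n) = 1)
    (hcomm : Ψ * G.lapMatrix ℝ = G.lapMatrix ℝ * Ψ) :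
    (∃ v : Fin (n + 1) → ℝ, v ≠ 0 ∧ (∃ μ : ℝ, G.lapMatrix ℝ *ᵥ v = μ • v) ∧
      v (Fin.last n) = 0) ∧
    ¬ Observable (-(G.lapMatrix ℝ)) (anchorRow n) :=
  symmetric_anchor_unobservable_general G Ψ hperm hΨne hfix hcomm
end
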